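/- In the sequential scheduling game on m unrelated machines where players have k-lookahead (k ≥ 1), every k-lookahead play of all n jobs starting from zero initial loads has makespan at most (m·k·2^k + m)·OPT; in particular the sequential price of anarchy is O(m·k·2^k). -/

import Mathlib

/-!
Sequential scheduling game on `m` unrelated machines with `k`-lookahead players.
Machines are indexed by `Fin m`, jobs by natural numbers (a block `[a:b]` of jobs plays
in the order `a, a+1, …, b`), and `p i j` is the processing time of job `j` on machine `i`.
-/

/-- Add the processing time of job `j` on machine `i` to the load vector `D`. -/
def bump {m : ℕ} (p : Fin m → ℕ → ℝ) (D : Fin m → ℝ) (i : Fin m) (j : ℕ) : Fin m → ℝ :=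
  fun i' => D i' + if i' = i then p i j else 0

/-- `Out p D js F`: `F` is the final load vector of some backward-induction
(subgame-perfect, ties broken arbitrarily) play of the finite extensive game in which
the jobs in `js` choose machines in order, starting from loads `D`; the payoff of each
job is the load, after all of these moves, of the machine it chose. -/
inductive Out {m : ℕ} (p : Fin m → ℕ → ℝ) : (Fin m → ℝ) → List ℕ → (Fin m → ℝ) → Prop
  | nil (D : Fin m → ℝ) : Out p D [] D
  | cons (D : Fin m → ℝ) (j : ℕ) (js : List ℕ) (i : Fin m) (cont : Fin m → Fin m → ℝ)
      (hcont : ∀ i', Out p (bump p D i' j) js (cont i'))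
      (hopt : ∀ i', cont i i ≤ cont i' i') :
      Out p D (j :: js) (cont i)

/-- `i` is an optimal root move, for the root job `j` followed by the jobs `js`,
of the lookahead game starting from loads `D`, solved by backward induction
(ties broken arbitrarily). -/
def RootMove {m : ℕ} (p : Fin m → ℕ → ℝ) (D : Fin m → ℝ) (j : ℕ) (js : List ℕ)
    (i : Fin m) : Prop :=
  ∃ cont : Fin m → Fin m → ℝ,
    (∀ i', Out p (bump p D i' j) js (cont i')) ∧ (∀ i', cont i i ≤ cont i' i')

/-- `Play p k D a b F`: starting from initial loads `D`, the block `[a:b]` of jobs plays a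
`k`-lookahead play resulting in final loads `F`: the first remaining job `a` makes an
optimal root move of the lookahead game on jobs `a, a+1, …, min (a+k) b`, its processing
time is added to the chosen machine, and the remaining jobs continue. -/
inductive Play {m : ℕ} (p : Fin m → ℕ → ℝ) (k : ℕ) :
    (Fin m → ℝ) → ℕ → ℕ → (Fin m → ℝ) → Prop
  | nil (D : Fin m → ℝ) (a b : ℕ) (h : b < a) : Play p k D a b D
  | cons (D : Fin m → ℝ) (a b : ℕ) (i : Fin m) (F : Fin m → ℝ) (hab : a ≤ b)
      (hroot : RootMove p D a (List.range' (a + 1) (min (a + k) b - a)) i)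
      (hplay : Play p k (bump p D i a) (a + 1) b F) :
      Play p k D a b F

/-- Maximum load of a load vector. -/
noncomputable def maxLoad {m : ℕ} (D : Fin m → ℝ) : ℝ := ⨆ i, D i

/-- `ΔL([a:b])`: the maximum possible increase of the makespan caused by the block
`[a:b]` of jobs, over all nonnegative initial loads and all `k`-lookahead plays. -/
noncomputable def deltaL {m : ℕ} (p : Fin m → ℕ → ℝ) (k a b : ℕ) : ℝ :=
  sSup {x | ∃ D F : Fin m → ℝ,
    (∀ i, 0 ≤ D i) ∧ Play p k D a b F ∧ x = maxLoad F - maxLoad D}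

/-- Minimum processing time of job `j`. -/
noncomputable def pmin {m : ℕ} (p : Fin m → ℕ → ℝ) (j : ℕ) : ℝ := ⨅ i, p i j

/-- Makespan of an arbitrary schedule `τ` of jobs `1, …, n` on `m` machines. -/
noncomputable def makespanM {m : ℕ} (n : ℕ) (p : Fin m → ℕ → ℝ) (τ : ℕ → Fin m) : ℝ :=
  ⨆ i, ∑ j ∈ Finset.Icc 1 n, if τ j = i then p i j else 0

/-- Optimal (minimum) makespan over all schedules of jobs `1, …, n`. -/
noncomputable def OPTm {m : ℕ} (n : ℕ) (p : Fin m → ℕ → ℝ) : ℝ :=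
  sInf {x | ∃ τ : ℕ → Fin m, x = makespanM n p τ}

/-!
A job making an optimal root move can always imitate the deviation to a machine of minimum
processing time, after which the lookahead game raises the makespan by at most `outBound`
of its remaining jobs; optimality of the actual move then keeps the makespan within
`pmin + outBound` of where it was. Unwinding `outBound` over a lookahead window of at most
`k` jobs, the job `a + t` of a play starting at `a` is charged at most `2 ^ min k t` times its
minimum processing time, so the final makespan is at most `2 ^ k · ∑ pmin ≤ 2 ^ k · m · OPT`.
-/

/-- Bound on the makespan increase caused by a backward-induction play of the jobs in a list. -/
noncomputable def outBound {m : ℕ} (p : Fin m → ℕ → ℝ) : List ℕ → ℝ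
  | [] => 0
  | j :: js => pmin p j + 2 * outBound p js

section LoadBounds

variable {m : ℕ} {p : Fin m → ℕ → ℝ}

lemma pmin_nonneg [Nonempty (Fin m)] (hp : ∀ i j, 0 ≤ p i j) (j : ℕ) : 0 ≤ pmin p j :=
  le_ciInf fun i => hp i j

lemma pmin_le (i : Fin m) (j : ℕ) : pmin p j ≤ p i j :=
  ciInf_le (Set.finite_range _).bddBelow i

lemma outBound_nonneg [Nonempty (Fin m)] (hp : ∀ i j, 0 ≤ p i j) :
    ∀ js, 0 ≤ outBound p js
  | [] => le_rfl
  | j :: js => add_nonneg (pmin_nonneg hp j) (mul_nonneg zero_le_two (outBound_nonneg hp js))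

lemma outBound_range' (c w : ℕ) :
    outBound p (List.range' c w) = ∑ t ∈ Finset.range w, 2 ^ t * pmin p (c + t) := by
  induction w generalizing c with
  | zero => rfl
  | succ w ih =>
    rw [List.range'_succ, outBound, ih, Finset.sum_range_succ', Finset.mul_sum]
    simp only [pow_succ, add_assoc, add_comm 1, pow_zero, one_mul, add_zero]
    rw [add_comm]
    congr 1
    exact Finset.sum_congr rfl fun t _ => by ring

lemma le_maxLoad (D : Fin m → ℝ) (i : Fin m) : D i ≤ maxLoad D :=
  le_ciSup (Set.finite_range D).bddAbove i

lemma maxLoad_le [Nonempty (Fin m)] {D : Fin m → ℝ} {c : ℝ} (h : ∀ i, D i ≤ c) :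
    maxLoad D ≤ c :=
  ciSup_le h

lemma maxLoad_bump_le [Nonempty (Fin m)] {D : Fin m → ℝ} {i : Fin m} {j : ℕ} {c : ℝ}
    (hD : maxLoad D ≤ c) (hi : D i + p i j ≤ c) : maxLoad (bump p D i j) ≤ c := by
  refine maxLoad_le fun i' => ?_
  by_cases h : i' = i
  · subst h; simpa [bump] using hi
  · simpa [bump, h] using (le_maxLoad D i').trans hD

lemma Out.le (hp : ∀ i j, 0 ≤ p i j) {D F : Fin m → ℝ} {js : List ℕ} (h : Out p D js F) :
    D ≤ F := by
  induction h with
  | nil D => exact le_rfl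
  | cons D j js i cont hcont hopt ih =>
    refine le_trans (fun i' => ?_) (ih i)
    simp only [bump, le_add_iff_nonneg_right]
    split_ifs
    exacts [hp i j, le_rfl]

lemma maxLoad_bump_le_of_optimal [Nonempty (Fin m)] (hp : ∀ i j, 0 ≤ p i j)
    {D : Fin m → ℝ} {j : ℕ} {js : List ℕ} {i : Fin m} {cont : Fin m → Fin m → ℝ}
    (hcont : ∀ i', Out p (bump p D i' j) js (cont i'))
    (hbound : ∀ i', maxLoad (cont i') ≤ maxLoad (bump p D i' j) + outBound p js)
    (hopt : ∀ i', cont i i ≤ cont i' i') :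
    maxLoad (bump p D i j) ≤ maxLoad D + pmin p j + outBound p js := by
  have hpmin := pmin_nonneg hp j
  have hout := outBound_nonneg hp js
  obtain ⟨i₀, hi₀⟩ : ∃ i₀, p i₀ j = pmin p j := exists_eq_ciInf_of_finite
  have hdev : maxLoad (bump p D i₀ j) ≤ maxLoad D + pmin p j :=
    maxLoad_bump_le (by linarith) (by linarith [le_maxLoad D i₀])
  refine maxLoad_bump_le (by linarith) ?_
  calc D i + p i j = bump p D i j i := by simp [bump]
    _ ≤ cont i i := (hcont i).le hp i
    _ ≤ cont i₀ i₀ := hopt i₀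
    _ ≤ maxLoad (cont i₀) := le_maxLoad _ _
    _ ≤ maxLoad D + pmin p j + outBound p js := by linarith [hbound i₀]

lemma Out.maxLoad_le [Nonempty (Fin m)] (hp : ∀ i j, 0 ≤ p i j) {D F : Fin m → ℝ}
    {js : List ℕ} (h : Out p D js F) : maxLoad F ≤ maxLoad D + outBound p js := by
  induction h with
  | nil D => simp [outBound]
  | cons D j js i cont hcont hopt ih =>
    have := maxLoad_bump_le_of_optimal hp hcont ih hopt
    rw [outBound]
    linarith [ih i, outBound_nonneg hp js]

lemma RootMove.maxLoad_bump_le [Nonempty (Fin m)] (hp : ∀ i j, 0 ≤ p i j)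
    {D : Fin m → ℝ} {j : ℕ} {js : List ℕ} {i : Fin m} (h : RootMove p D j js i) :
    maxLoad (bump p D i j) ≤ maxLoad D + pmin p j + outBound p js :=
  let ⟨_, hcont, hopt⟩ := h
  maxLoad_bump_le_of_optimal hp hcont (fun i' => (hcont i').maxLoad_le hp) hopt

end LoadBounds

section Play

variable {m : ℕ} {p : Fin m → ℕ → ℝ}

lemma sum_range_min_eq_sum_ite (f : ℕ → ℝ) (k N : ℕ) :
    ∑ t ∈ Finset.range (min k N), f t = ∑ t ∈ Finset.range N, if t < k then f t else 0 := by
  rw [min_comm, ← Finset.range_inter_range, ← Finset.sum_ite_mem]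
  simp only [Finset.mem_range]

lemma two_pow_min_succ (k t : ℕ) :
    (2 : ℝ) ^ min k (t + 1) = 2 ^ min k t + if t < k then 2 ^ t else 0 := by
  split_ifs with h
  · rw [min_eq_right (by omega), min_eq_right h.le, pow_succ]
    ring
  · rw [min_eq_left (by omega), min_eq_left (by omega), add_zero]

/-- Job `a + t` is charged `1` as a root and `2 ^ (s - 1)` inside the lookahead window of job
`a + t - s`, for `1 ≤ s ≤ min k t`; these add up to `2 ^ min k t`. -/
lemma Play.maxLoad_le_add_sum_two_pow_mul [Nonempty (Fin m)] (hp : ∀ i j, 0 ≤ p i j)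
    {k a b : ℕ} {D F : Fin m → ℝ} (h : Play p k D a b F) :
    maxLoad F ≤ maxLoad D + ∑ t ∈ Finset.range (b + 1 - a), 2 ^ min k t * pmin p (a + t) := by
  induction h with
  | nil D a b hba => simp [show b + 1 - a = 0 by omega]
  | cons D a b i F hab hroot hplay ih =>
    have hstep := hroot.maxLoad_bump_le hp
    rw [show min (a + k) b - a = min k (b - a) by omega, outBound_range',
      sum_range_min_eq_sum_ite] at hstep
    rw [show b + 1 - (a + 1) = b - a by omega] at ih
    have hsplit : ∑ t ∈ Finset.range (b + 1 - a), 2 ^ min k t * pmin p (a + t)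
        = pmin p a + (∑ t ∈ Finset.range (b - a), 2 ^ min k t * pmin p (a + 1 + t)
          + ∑ t ∈ Finset.range (b - a), if t < k then 2 ^ t * pmin p (a + 1 + t) else 0) := by
      rw [show b + 1 - a = b - a + 1 by omega, Finset.sum_range_succ', ← Finset.sum_add_distrib]
      simp only [two_pow_min_succ, add_mul, ite_mul, zero_mul, min_zero, pow_zero, one_mul,
        add_zero, add_comm 1, add_assoc]
      ring
    linarith

lemma Play.maxLoad_le_add_two_pow_mul_sum [Nonempty (Fin m)] (hp : ∀ i j, 0 ≤ p i j)
    {k a b : ℕ} {D F : Fin m → ℝ} (h : Play p k D a b F) :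
    maxLoad F ≤ maxLoad D + 2 ^ k * ∑ j ∈ Finset.Icc a b, pmin p j := by
  rw [← Finset.Ico_add_one_right_eq_Icc, Finset.sum_Ico_eq_sum_range, Finset.mul_sum]
  refine (h.maxLoad_le_add_sum_two_pow_mul hp).trans ?_
  gcongr with t
  · exact pmin_nonneg hp _
  · exact one_le_two
  · exact min_le_left _ _

end Play

section Optimum

variable {m : ℕ} {p : Fin m → ℕ → ℝ}

lemma sum_pmin_le_mul_makespanM (n : ℕ) (τ : ℕ → Fin m) :
    ∑ j ∈ Finset.Icc 1 n, pmin p j ≤ m * makespanM n p τ :=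
  calc ∑ j ∈ Finset.Icc 1 n, pmin p j
      ≤ ∑ j ∈ Finset.Icc 1 n, p (τ j) j := Finset.sum_le_sum fun j _ => pmin_le (τ j) j
    _ = ∑ i, ∑ j ∈ Finset.Icc 1 n, if τ j = i then p i j else 0 := by
      rw [Finset.sum_comm]
      simp
    _ ≤ ∑ _i : Fin m, makespanM n p τ :=
      Finset.sum_le_sum fun i _ => le_ciSup (f := fun i =>
        ∑ j ∈ Finset.Icc 1 n, if τ j = i then p i j else 0) (Set.finite_range _).bddAbove i
    _ = m * makespanM n p τ := by simp

lemma sum_pmin_le_mul_OPTm [Nonempty (Fin m)] (n : ℕ) :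
    ∑ j ∈ Finset.Icc 1 n, pmin p j ≤ m * OPTm n p := by
  have hm : (0 : ℝ) < m := Nat.cast_pos.2 (Fin.pos_iff_nonempty.2 ‹_›)
  rw [← div_le_iff₀' hm]
  refine le_csInf ⟨_, Classical.arbitrary (ℕ → Fin m), rfl⟩ ?_
  rintro _ ⟨τ, rfl⟩
  rw [div_le_iff₀' hm]
  exact sum_pmin_le_mul_makespanM n τ

lemma OPTm_nonneg (hp : ∀ i j, 0 ≤ p i j) (n : ℕ) : 0 ≤ OPTm n p := by
  refine Real.sInf_nonneg ?_
  rintro _ ⟨τ, rfl⟩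
  exact Real.iSup_nonneg fun i => Finset.sum_nonneg fun j _ => by
    split_ifs
    exacts [hp i j, le_rfl]

end Optimum

theorem spoa_kLookahead_m_machines_general (m k n : ℕ)
    (p : Fin m → ℕ → ℝ) (hp : ∀ i j, 0 ≤ p i j)
    (F : Fin m → ℝ) (hF : Play p k (fun _ => 0) 1 n F) :
    maxLoad F ≤ ((m : ℝ) * k * 2 ^ k + m) * OPTm n p := by
  obtain rfl | hm := Nat.eq_zero_or_pos m
  · simp [maxLoad]
  have : Nonempty (Fin m) := Fin.pos_iff_nonempty.1 hm
  have hplay := hF.maxLoad_le_add_two_pow_mul_sum hp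
  rw [show maxLoad (fun _ : Fin m => (0 : ℝ)) = 0 from ciSup_const, zero_add] at hplay
  have hcoef : (m : ℝ) * 2 ^ k ≤ m * k * 2 ^ k + m := by
    rcases Nat.eq_zero_or_pos k with rfl | hk
    · simp
    · nlinarith [show (1 : ℝ) ≤ k from mod_cast hk, show (0 : ℝ) ≤ m * 2 ^ k by positivity]
  calc maxLoad F ≤ 2 ^ k * ∑ j ∈ Finset.Icc 1 n, pmin p j := hplay
    _ ≤ 2 ^ k * (m * OPTm n p) := by gcongr; exact sum_pmin_le_mul_OPTm n
    _ = (m * 2 ^ k) * OPTm n p := by ring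
    _ ≤ ((m : ℝ) * k * 2 ^ k + m) * OPTm n p :=
      mul_le_mul_of_nonneg_right hcoef (OPTm_nonneg hp n)

/-- On `m` unrelated machines with `k`-lookahead players (`k ≥ 1`),
every `k`-lookahead play of all `n` jobs from zero initial loads has makespan at most
`(m·k·2^k + m) · OPT`; in particular the sequential price of anarchy is `O(m·k·2^k)`. -/
theorem spoa_kLookahead_m_machines (m k n : ℕ) (hm : 0 < m) (hk : 1 ≤ k)
    (p : Fin m → ℕ → ℝ) (hp : ∀ i j, 0 ≤ p i j)
    (F : Fin m → ℝ) (hF : Play p k (fun _ => 0) 1 n F) :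
    maxLoad F ≤ ((m : ℝ) * k * 2 ^ k + m) * OPTm n p :=
  spoa_kLookahead_m_machines_general m k n p hp F hF
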